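/- Fix τ > −2 and define, for p > 1, γ(p) = 2p + 2√(p(p−1)) − 1 and Γ(p) = ((2+τ)γ(p) + 2p + τ)/(p−1). Then Γ(p) = 2(2+τ)(1 + 1/(p−1) + √(1 + 1/(p−1))) + 2 for all p > 1; Γ is strictly decreasing on (1,∞) with Γ(p) → +∞ as p → 1⁺ and Γ(p) → 10 + 4τ as p → ∞. Consequently, for every N' > 10 + 4τ there is a unique p* > 1 with Γ(p*) = N', and this p* equals p_c(N',τ) = P_+(N',τ); moreover p_c(N',τ) is strictly decreasing in N' (for fixed τ) and strictly increasing in τ (for fixed N') on the region N' > 10 + 4τ. -/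

import Mathlib

/-!
Put `s = 1/(p-1)` and `t = √(1 + s)`. Then `Γ(p) = 2(2+τ)(t² + t) + 2`, and `t` decreases from `∞`
to `1` as `p` runs over `(1, ∞)`; this gives the monotonicity of `Γ` and both limits. For
`N' > 10 + 4τ` the quadratic `2(2+τ)(t² + t) + 2 = N'` has a root `t > 1`, and
`p = t²/(t² - 1)` is `P₊(N',τ)`. Monotonicity of `p_c` in `N'` and in `τ` then follows because
`Γ` is decreasing in `p` and increasing in `τ`.
-/

open Set Filter

noncomputable section

/-- `γ(p) = 2p + 2√(p(p-1)) - 1`. -/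
def gammaF (p : ℝ) : ℝ := 2 * p + 2 * Real.sqrt (p * (p - 1)) - 1

/-- `Γ(p) = ((2+τ)γ(p) + 2p + τ)/(p-1)`. -/
def GammaF (τ p : ℝ) : ℝ := ((2 + τ) * gammaF p + 2 * p + τ) / (p - 1)

/-- `P₊(N',τ)`, the critical exponent `p_c(N',τ)` in the range `N' > 10 + 4τ`. -/
def Pplus (N' τ : ℝ) : ℝ :=
  ((N' - 2) ^ 2 - 2 * (2 + τ) * (N' + τ)
      + 2 * (2 + τ) * Real.sqrt ((2 + τ) * (2 * N' + τ - 2)))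
    / ((N' - 2) * (N' - 4 * τ - 10))

open Topology

theorem GammaF_eq (τ : ℝ) {p : ℝ} (hp : 1 < p) :
    GammaF τ p = 2 * (2 + τ) * (1 + 1 / (p - 1) + √(1 + 1 / (p - 1))) + 2 := by
  have hp₀ : 0 < p - 1 := sub_pos.2 hp
  have hsqrt : √(p * (p - 1)) = (p - 1) * √(1 + 1 / (p - 1)) := by
    rw [← Real.sqrt_sq hp₀.le, ← Real.sqrt_mul (sq_nonneg _), Real.sqrt_sq hp₀.le]
    congr 1
    field_simp
    ring
  rw [GammaF, gammaF, hsqrt]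
  field_simp
  ring

theorem strictMono_GammaF_left {p : ℝ} (hp : 1 < p) : StrictMono (GammaF · p) := by
  intro τ₁ τ₂ h
  simp only [GammaF_eq _ hp]
  have : 0 < 1 / (p - 1) := one_div_pos.2 (sub_pos.2 hp)
  nlinarith [Real.sqrt_nonneg (1 + 1 / (p - 1))]

theorem strictAntiOn_GammaF {τ : ℝ} (hτ : -2 < τ) : StrictAntiOn (GammaF τ) (Ioi 1) := by
  intro p hp q hq hpq
  rw [GammaF_eq τ hp, GammaF_eq τ hq]
  have hinv : 1 / (q - 1) < 1 / (p - 1) :=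
    one_div_lt_one_div_of_lt (sub_pos.2 hp) (sub_lt_sub_right hpq 1)
  have hsqrt : √(1 + 1 / (q - 1)) < √(1 + 1 / (p - 1)) :=
    Real.sqrt_lt_sqrt (by have := sub_pos.2 hq.out; positivity) (by linarith)
  have h2τ : 0 < 2 * (2 + τ) := by linarith
  gcongr ?_ + 2
  exact mul_lt_mul_of_pos_left (by linarith) h2τ

theorem tendsto_GammaF_nhdsGT_one {τ : ℝ} (hτ : -2 < τ) :
    Tendsto (GammaF τ) (𝓝[>] 1) atTop := by
  have hsub : Tendsto (fun p : ℝ => p - 1) (𝓝[>] 1) (𝓝[>] 0) := by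
    refine tendsto_nhdsWithin_iff.2 ⟨?_, ?_⟩
    · simpa using (tendsto_id.sub_const 1).mono_left (nhdsWithin_le_nhds (a := (1 : ℝ)))
    · filter_upwards [self_mem_nhdsWithin] with p (hp : 1 < p) using sub_pos.2 hp
  have hlower : Tendsto (fun p : ℝ => 2 * (2 + τ) * (p - 1)⁻¹ + 2) (𝓝[>] 1) atTop :=
    tendsto_atTop_add_const_right _ 2
      ((tendsto_inv_nhdsGT_zero.comp hsub).const_mul_atTop (by linarith))
  refine tendsto_atTop_mono' _ ?_ hlower
  filter_upwards [self_mem_nhdsWithin] with p (hp : 1 < p)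
  rw [GammaF_eq τ hp, one_div]
  nlinarith [Real.sqrt_nonneg (1 + (p - 1)⁻¹)]

theorem tendsto_GammaF_atTop (τ : ℝ) : Tendsto (GammaF τ) atTop (𝓝 (10 + 4 * τ)) := by
  have hinv : Tendsto (fun p : ℝ => 1 / (p - 1)) atTop (𝓝 0) := by
    have : Tendsto (fun p : ℝ => p - 1) atTop atTop := by
      simpa only [id, sub_eq_add_neg] using tendsto_atTop_add_const_right _ (-1) tendsto_id
    exact (tendsto_inv_atTop_zero.comp this).congr fun p => (one_div (p - 1)).symm
  have hcont : Continuous (fun s : ℝ => 2 * (2 + τ) * (1 + s + √(1 + s)) + 2) := by fun_prop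
  have hlim := (hcont.tendsto 0).comp hinv
  rw [show 2 * (2 + τ) * (1 + 0 + √(1 + 0)) + 2 = 10 + 4 * τ by norm_num; ring] at hlim
  refine hlim.congr' ?_
  filter_upwards [eventually_gt_atTop 1] with p hp
  exact (GammaF_eq τ hp).symm

theorem one_lt_sq_div_sq_sub_one {t : ℝ} (ht : 1 < t) : 1 < t ^ 2 / (t ^ 2 - 1) := by
  have : 0 < t ^ 2 - 1 := by nlinarith
  exact (one_lt_div this).2 (by linarith)

theorem GammaF_sq_div_sq_sub_one (τ : ℝ) {t : ℝ} (ht : 1 < t) :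
    GammaF τ (t ^ 2 / (t ^ 2 - 1)) = 2 * (2 + τ) * (t ^ 2 + t) + 2 := by
  have ht₂ : t ^ 2 - 1 ≠ 0 := by nlinarith
  have hsq : 1 + 1 / (t ^ 2 / (t ^ 2 - 1) - 1) = t ^ 2 := by
    field_simp
    ring
  rw [GammaF_eq τ (one_lt_sq_div_sq_sub_one ht), hsq, Real.sqrt_sq (by linarith)]

-- The value of `√(1 + 1/(p - 1))` at `p = P₊(N',τ)`: the positive root of
-- `2(2+τ)(t² + t) + 2 = N'`.
def criticalRoot (N' τ : ℝ) : ℝ := (√((2 + τ) * (2 * N' + τ - 2)) - (2 + τ)) / (2 * (2 + τ))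

section criticalRoot

variable {N' τ : ℝ}

theorem sq_sqrt_disc (hτ : -2 < τ) (hN : 10 + 4 * τ < N') :
    √((2 + τ) * (2 * N' + τ - 2)) ^ 2 = (2 + τ) * (2 * N' + τ - 2) :=
  Real.sq_sqrt (by nlinarith)

theorem three_mul_lt_sqrt_disc (hτ : -2 < τ) (hN : 10 + 4 * τ < N') :
    3 * (2 + τ) < √((2 + τ) * (2 * N' + τ - 2)) := by
  rw [show 3 * (2 + τ) = √((3 * (2 + τ)) ^ 2) from (Real.sqrt_sq (by linarith)).symm]
  exact Real.sqrt_lt_sqrt (sq_nonneg _) (by nlinarith)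

theorem one_lt_criticalRoot (hτ : -2 < τ) (hN : 10 + 4 * τ < N') : 1 < criticalRoot N' τ := by
  rw [criticalRoot, one_lt_div (by linarith)]
  linarith [three_mul_lt_sqrt_disc hτ hN]

theorem criticalRoot_sq_add_self (hτ : -2 < τ) (hN : 10 + 4 * τ < N') :
    criticalRoot N' τ ^ 2 + criticalRoot N' τ = (N' - 2) / (2 * (2 + τ)) := by
  have ha : 2 + τ ≠ 0 := by linarith
  rw [criticalRoot]
  field_simp
  linear_combination sq_sqrt_disc hτ hN

theorem Pplus_eq_criticalRoot (hτ : -2 < τ) (hN : 10 + 4 * τ < N') :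
    Pplus N' τ = criticalRoot N' τ ^ 2 / (criticalRoot N' τ ^ 2 - 1) := by
  have hr := three_mul_lt_sqrt_disc hτ hN
  set r := √((2 + τ) * (2 * N' + τ - 2))
  have ha : 2 + τ ≠ 0 := by linarith
  have hden : (N' - 2) * (N' - 4 * τ - 10) ≠ 0 := mul_ne_zero (by linarith) (by linarith)
  have hden' : (r + (2 + τ)) * (r - 3 * (2 + τ)) ≠ 0 := mul_ne_zero (by linarith) (by linarith)
  have hr2 : r ^ 2 = (2 + τ) * (2 * N' + τ - 2) := sq_sqrt_disc hτ hN
  have hP : Pplus N' τ = (r - (2 + τ)) ^ 2 / ((r + (2 + τ)) * (r - 3 * (2 + τ))) := by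
    -- substitute `N' - 2 = (r² - (2+τ)²) / (2(2+τ))` in numerator and denominator of `Pplus`
    rw [Pplus, div_eq_div_iff hden hden']
    linear_combination (4 * r + 2 * τ * r + 4 * N' + 2 * N' * τ - 32 - 28 * τ - 6 * τ ^ 2) * hr2
  rw [hP, criticalRoot]
  field_simp
  ring

end criticalRoot

theorem one_lt_Pplus {N' τ : ℝ} (hτ : -2 < τ) (hN : 10 + 4 * τ < N') : 1 < Pplus N' τ := by
  rw [Pplus_eq_criticalRoot hτ hN]
  exact one_lt_sq_div_sq_sub_one (one_lt_criticalRoot hτ hN)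

theorem GammaF_Pplus {N' τ : ℝ} (hτ : -2 < τ) (hN : 10 + 4 * τ < N') :
    GammaF τ (Pplus N' τ) = N' := by
  rw [Pplus_eq_criticalRoot hτ hN, GammaF_sq_div_sq_sub_one τ (one_lt_criticalRoot hτ hN),
    criticalRoot_sq_add_self hτ hN]
  field_simp [show 2 + τ ≠ 0 by linarith]
  ring

theorem strictAntiOn_Pplus_left {τ : ℝ} (hτ : -2 < τ) :
    StrictAntiOn (Pplus · τ) (Ioi (10 + 4 * τ)) := by
  intro N₁ hN₁ N₂ hN₂ h
  rw [← (strictAntiOn_GammaF hτ).lt_iff_gt (one_lt_Pplus hτ hN₁) (one_lt_Pplus hτ hN₂),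
    GammaF_Pplus hτ hN₁, GammaF_Pplus hτ hN₂]
  exact h

theorem strictMonoOn_Pplus_right (N' : ℝ) :
    StrictMonoOn (Pplus N') (Ioo (-2) ((N' - 10) / 4)) := by
  rintro τ₁ ⟨hτ₁, hτ₁N⟩ τ₂ ⟨hτ₂, hτ₂N⟩ h
  have hN₁ : 10 + 4 * τ₁ < N' := by linarith
  have hN₂ : 10 + 4 * τ₂ < N' := by linarith
  have hp₂ := one_lt_Pplus hτ₂ hN₂
  rw [← (strictAntiOn_GammaF hτ₁).lt_iff_gt hp₂ (one_lt_Pplus hτ₁ hN₁), GammaF_Pplus hτ₁ hN₁]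
  calc GammaF τ₁ (Pplus N' τ₂) < GammaF τ₂ (Pplus N' τ₂) := strictMono_GammaF_left hp₂ h
    _ = N' := GammaF_Pplus hτ₂ hN₂

/-- properties of `Γ` and monotonicity of `p_c`. For fixed
`τ > -2`: `Γ(p) = 2(2+τ)(1 + 1/(p-1) + √(1 + 1/(p-1))) + 2` for `p > 1`; `Γ` is
strictly decreasing on `(1,∞)`, tends to `+∞` as `p → 1⁺` and to `10 + 4τ` as
`p → ∞`; for every `N' > 10 + 4τ` there is a unique `p* > 1` with `Γ(p*) = N'`,
namely `p* = p_c(N',τ) = P₊(N',τ)`; and on the region `N' > 10 + 4τ`, `p_c(N',τ)`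
is strictly decreasing in `N'` and strictly increasing in `τ`. -/
theorem stmt_18 (τ : ℝ) (hτ : -2 < τ) :
    (∀ p : ℝ, 1 < p →
      GammaF τ p = 2 * (2 + τ) * (1 + 1 / (p - 1) + Real.sqrt (1 + 1 / (p - 1))) + 2) ∧
    StrictAntiOn (GammaF τ) (Set.Ioi 1) ∧
    Filter.Tendsto (GammaF τ) (nhdsWithin 1 (Set.Ioi 1)) Filter.atTop ∧
    Filter.Tendsto (GammaF τ) Filter.atTop (nhds (10 + 4 * τ)) ∧
    (∀ N' : ℝ, 10 + 4 * τ < N' →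
      (∃! p : ℝ, 1 < p ∧ GammaF τ p = N') ∧
      1 < Pplus N' τ ∧ GammaF τ (Pplus N' τ) = N') ∧
    (∀ N₁ N₂ : ℝ, 10 + 4 * τ < N₁ → N₁ < N₂ → Pplus N₂ τ < Pplus N₁ τ) ∧
    (∀ τ₁ τ₂ N' : ℝ, -2 < τ₁ → τ₁ < τ₂ → 10 + 4 * τ₂ < N' →
      Pplus N' τ₁ < Pplus N' τ₂) := by
  refine ⟨fun _ hp => GammaF_eq τ hp, strictAntiOn_GammaF hτ, tendsto_GammaF_nhdsGT_one hτ,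
    tendsto_GammaF_atTop τ, fun N' hN => ⟨?_, one_lt_Pplus hτ hN, GammaF_Pplus hτ hN⟩,
    fun N₁ N₂ hN₁ h => strictAntiOn_Pplus_left hτ hN₁ (hN₁.trans h) h,
    fun τ₁ τ₂ N' hτ₁ h hN => strictMonoOn_Pplus_right N' ⟨hτ₁, by linarith⟩
      ⟨hτ₁.trans h, by linarith⟩ h⟩
  have hP := GammaF_Pplus hτ hN
  exact ⟨Pplus N' τ, ⟨one_lt_Pplus hτ hN, hP⟩, fun p ⟨hp, hGp⟩ =>
    (strictAntiOn_GammaF hτ).injOn hp (one_lt_Pplus hτ hN) (hGp.trans hP.symm)⟩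

end
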